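/- arXiv:2509.17871 — 2 statements merged into one kernel-verified Lean document; each statement's English description precedes it below -/
import Mathlib

section
/- Let (Ω, 𝒫) be a probability space, S a real random variable, and Z a real random variable independent of S with probability density f : ℝ → ℝ≥0 (so ∫ f = 1). Fix w > 0 and a threshold T ∈ ℝ. Define the corrected-noised-tally outcomes O_yes = (𝟙{S + w > T}, S + w + Z) and O_no = (𝟙{S > T}, S + Z), and the pivotality Δ = Pr[S + w > T] − Pr[S > T] (which satisfies 0 ≤ Δ ≤ 1). Then for every measurable g : {0,1} × ℝ → {0,1}, E[g(O_yes)] − E[g(O_no)] ≤ Δ + (1 − Δ)·∫_ℝ max(f(u − w) − f(u), 0) du. -/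
/-!
Condition on the tally `S = s` of the other voters. Unless `s` lies in the pivotal window
`(T - w, T]`, both outcomes announce the same winner and their noised tallies differ by a shift
of `w`, so for a `[0, 1]`-valued `g` the difference of conditional expectations is at most
`∫ (f (u - w) - f u)⁺ du`; in the pivotal window it is at most `1`. The window has mass `Δ` under
the law of `S`, and averaging gives `Δ + (1 - Δ) ∫ (f (u - w) - f u)⁺ du`.
-/

open MeasureTheory ProbabilityTheory

/-- The published outcome (winner, noised yes-weight) for true yes-weight `s` and noise `z`:
`O_no = correctedOutcome T S Z` and `O_yes = correctedOutcome T (S + w) Z`. -/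
noncomputable def correctedOutcome (T s z : ℝ) : Bool × ℝ := (decide (T < s), s + z)

theorem measurable_correctedOutcome (T : ℝ) :
    Measurable (Function.uncurry (correctedOutcome T)) := by
  have hwin : Measurable fun s : ℝ => decide (T < s) :=
    measurable_to_bool <| by
      simp only [Set.preimage, Set.mem_singleton_iff, decide_eq_true_eq]
      exact measurableSet_Ioi
  exact (hwin.comp measurable_fst).prodMk (measurable_fst.add measurable_snd)

theorem correctedOutcome_add_of_notMem_Ioc {T s w : ℝ} (hw : 0 ≤ w)
    (hs : s ∉ Set.Ioc (T - w) T) (z : ℝ) :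
    correctedOutcome T (s + w) z = correctedOutcome T s (z + w) := by
  simp only [Set.mem_Ioc, not_and_or, not_lt, not_le] at hs
  simp only [correctedOutcome, Prod.mk.injEq, decide_eq_decide]
  constructor
  · constructor <;> intro <;> rcases hs with hs | hs <;> linarith
  · ring

theorem measureReal_lt_add_sub_measureReal_lt {Ω : Type*} [MeasurableSpace Ω] {μ : Measure Ω}
    [IsFiniteMeasure μ] {S : Ω → ℝ} (hS : Measurable S) {T w : ℝ} (hw : 0 ≤ w) :
    μ.real {ω | T < S ω + w} - μ.real {ω | T < S ω} = (μ.map S).real (Set.Ioc (T - w) T) := by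
  rw [map_measureReal_apply hS measurableSet_Ioc, sub_eq_iff_eq_add,
    ← measureReal_union (s₂ := {ω | T < S ω}) _ (hS measurableSet_Ioi)]
  · congr 1
    ext ω
    simp only [Set.mem_ofPred_eq, Set.mem_union, Set.mem_preimage, Set.mem_Ioc]
    constructor
    · intro h
      by_cases hT : T < S ω
      · exact .inr hT
      · exact .inl ⟨by linarith, by linarith⟩
    · rintro (⟨h, -⟩ | h) <;> linarith
  · exact Set.disjoint_left.2 fun ω h h' => not_lt.2 (Set.mem_Ioc.1 h).2 h'

theorem ProbabilityTheory.IndepFun.integral_comp_eq_integral_integral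
    {Ω α β E : Type*} [MeasurableSpace Ω] [MeasurableSpace α] [MeasurableSpace β]
    [NormedAddCommGroup E] [NormedSpace ℝ E] {μ : Measure Ω} [IsFiniteMeasure μ]
    {X : Ω → α} {Y : Ω → β} (hX : AEMeasurable X μ) (hY : AEMeasurable Y μ)
    (hXY : IndepFun X Y μ) {F : α × β → E} (hF : Integrable F ((μ.map X).prod (μ.map Y))) :
    ∫ ω, F (X ω, Y ω) ∂μ = ∫ x, ∫ y, F (x, y) ∂μ.map Y ∂μ.map X := by
  rw [← integral_prod F hF, ← hXY.map_prod_eq_prod_map_map hX hY] at *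
  exact (integral_map (hX.prodMk hY) hF.aestronglyMeasurable).symm

theorem integral_mul_le_integral_max_zero {α : Type*} [MeasurableSpace α] {μ : Measure α}
    {p φ : α → ℝ} (hp : Integrable p μ) (hφ : AEStronglyMeasurable φ μ)
    (hφ0 : ∀ x, 0 ≤ φ x) (hφ1 : ∀ x, φ x ≤ 1) :
    ∫ x, p x * φ x ∂μ ≤ ∫ x, max (p x) 0 ∂μ := by
  have hφb : ∀ᵐ x ∂μ, ‖φ x‖ ≤ 1 :=
    ae_of_all _ fun x => (Real.norm_of_nonneg (hφ0 x)).trans_le (hφ1 x)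
  refine integral_mono (hp.mul_bdd hφ hφb) hp.pos_part fun x => ?_
  rcases le_total (p x) 0 with h | h
  · exact (mul_nonpos_of_nonpos_of_nonneg h (hφ0 x)).trans (le_max_right _ _)
  · exact (mul_le_of_le_one_right h (hφ1 x)).trans (le_max_left _ _)

theorem integral_withDensity_ofReal_eq_integral_mul {α : Type*} [MeasurableSpace α]
    {μ : Measure α} {f : α → ℝ} (hfm : Measurable f) (hf0 : ∀ x, 0 ≤ f x) (h : α → ℝ) :
    ∫ x, h x ∂μ.withDensity (fun x => ENNReal.ofReal (f x)) = ∫ x, f x * h x ∂μ := by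
  rw [integral_withDensity_eq_integral_toReal_smul hfm.ennreal_ofReal
    (ae_of_all _ fun _ => ENNReal.ofReal_lt_top)]
  simp only [ENNReal.toReal_ofReal (hf0 _), smul_eq_mul]

theorem integral_comp_add_sub_integral_le {f : ℝ → ℝ} (hfm : Measurable f) (hf0 : ∀ u, 0 ≤ f u)
    (hfi : Integrable f) {φ : ℝ → ℝ} (hφ : Measurable φ) (hφ0 : ∀ u, 0 ≤ φ u)
    (hφ1 : ∀ u, φ u ≤ 1) (w : ℝ) :
    ∫ z, φ (z + w) ∂volume.withDensity (fun u => ENNReal.ofReal (f u))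
      - ∫ z, φ z ∂volume.withDensity (fun u => ENNReal.ofReal (f u))
      ≤ ∫ u, max (f (u - w) - f u) 0 := by
  have hφb : ∀ᵐ u, ‖φ u‖ ≤ 1 :=
    ae_of_all _ fun u => (Real.norm_of_nonneg (hφ0 u)).trans_le (hφ1 u)
  have hshift : ∫ z, f z * φ (z + w) = ∫ u, f (u - w) * φ u := by
    simpa using (integral_sub_right_eq_self (fun z => f z * φ (z + w)) w).symm
  rw [integral_withDensity_ofReal_eq_integral_mul hfm hf0,
    integral_withDensity_ofReal_eq_integral_mul hfm hf0, hshift,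
    ← integral_sub ((hfi.comp_sub_right w).mul_bdd hφ.aestronglyMeasurable hφb)
      (hfi.mul_bdd hφ.aestronglyMeasurable hφb)]
  simp only [← sub_mul]
  exact integral_mul_le_integral_max_zero ((hfi.comp_sub_right w).sub hfi)
    hφ.aestronglyMeasurable hφ0 hφ1

theorem integral_correctedOutcome_add_sub_le {ζ : Measure ℝ} [IsProbabilityMeasure ζ]
    {f : ℝ → ℝ} (hfm : Measurable f) (hf0 : ∀ u, 0 ≤ f u) (hfi : Integrable f)
    (hζ : ζ = volume.withDensity fun u => ENNReal.ofReal (f u))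
    {g : Bool × ℝ → ℝ} (hg : Measurable g) (hg0 : ∀ x, 0 ≤ g x) (hg1 : ∀ x, g x ≤ 1)
    {T w : ℝ} (hw : 0 ≤ w) (s : ℝ) :
    ∫ z, g (correctedOutcome T (s + w) z) ∂ζ - ∫ z, g (correctedOutcome T s z) ∂ζ
      ≤ (Set.Ioc (T - w) T).indicator (fun _ => 1 - ∫ u, max (f (u - w) - f u) 0) s
        + ∫ u, max (f (u - w) - f u) 0 := by
  have hφ : ∀ c, Measurable fun z => g (correctedOutcome T c z) := fun c =>
    hg.comp ((measurable_correctedOutcome T).comp measurable_prodMk_left)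
  by_cases hs : s ∈ Set.Ioc (T - w) T
  · rw [Set.indicator_of_mem hs, sub_add_cancel]
    have hyes : ∫ z, g (correctedOutcome T (s + w) z) ∂ζ ≤ 1 := by
      simpa using integral_mono (μ := ζ) (.of_mem_Icc 0 1 (hφ _).aemeasurable
        (ae_of_all _ fun _ => ⟨hg0 _, hg1 _⟩)) (integrable_const 1) fun _ => hg1 _
    have hno : 0 ≤ ∫ z, g (correctedOutcome T s z) ∂ζ := integral_nonneg fun _ => hg0 _
    linarith
  · rw [Set.indicator_of_notMem hs, zero_add, hζ]
    simp only [correctedOutcome_add_of_notMem_Ioc hw hs]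
    exact integral_comp_add_sub_integral_le hfm hf0 hfi (hφ s) (fun _ => hg0 _) (fun _ => hg1 _) w

/-- Bound on the bribe margin of any bribery condition function under the
corrected noised tally: for any measurable 0/1-valued `g` on the outcome
`(winner, noised yes-weight)`,
`E[g(O_yes)] − E[g(O_no)] ≤ Δ + (1 − Δ)·∫ max (f (u − w) − f u) 0 du`. -/
theorem corrected_noised_tally_bribe_margin_bound
    {Ω : Type*} [MeasurableSpace Ω] (μ : Measure Ω) [IsProbabilityMeasure μ]
    (S Z : Ω → ℝ) (hS : Measurable S) (hZ : Measurable Z)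
    (hindep : ProbabilityTheory.IndepFun S Z μ)
    (f : ℝ → ℝ) (hfmeas : Measurable f) (hf0 : ∀ u, 0 ≤ f u)
    (hf1 : ∫ u, f u = 1)
    (hdens : Measure.map Z μ =
      volume.withDensity (fun u => ENNReal.ofReal (f u)))
    (w T : ℝ) (hw : 0 < w)
    (g : Bool × ℝ → ℝ) (hg : Measurable g) (hg01 : ∀ x, g x = 0 ∨ g x = 1) :
    (∫ ω, g (decide (T < S ω + w), S ω + w + Z ω) ∂μ)
      - (∫ ω, g (decide (T < S ω), S ω + Z ω) ∂μ)
    ≤ ((μ {ω | T < S ω + w}).toReal - (μ {ω | T < S ω}).toReal)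
      + (1 - ((μ {ω | T < S ω + w}).toReal - (μ {ω | T < S ω}).toReal))
        * ∫ u, max (f (u - w) - f u) 0 := by
  have hg0 : ∀ x, 0 ≤ g x := fun x => by rcases hg01 x with h | h <;> simp [h]
  have hg1 : ∀ x, g x ≤ 1 := fun x => by rcases hg01 x with h | h <;> simp [h]
  have hfi : Integrable f := .of_integral_ne_zero (by simp [hf1])
  have := Measure.isProbabilityMeasure_map (μ := μ) hS.aemeasurable
  have := Measure.isProbabilityMeasure_map (μ := μ) hZ.aemeasurable
  set M := ∫ u, max (f (u - w) - f u) 0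
  have hint : ∀ c : ℝ → ℝ, Measurable c → Integrable
      (fun p : ℝ × ℝ => g (correctedOutcome T (c p.1) p.2)) ((μ.map S).prod (μ.map Z)) :=
    fun c hc => .of_mem_Icc 0 1 (hg.comp ((measurable_correctedOutcome T).comp
      ((hc.comp measurable_fst).prodMk measurable_snd))).aemeasurable
      (ae_of_all _ fun _ => ⟨hg0 _, hg1 _⟩)
  have hyes := hint (· + w) (measurable_add_const w)
  have hno := hint id measurable_id
  have hψ : Integrable (fun s => (Set.Ioc (T - w) T).indicator (fun _ => 1 - M) s + M)
      (μ.map S) := ((integrable_const _).indicator measurableSet_Ioc).add (integrable_const _)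
  calc _ = ∫ s, (∫ z, g (correctedOutcome T (s + w) z) ∂μ.map Z
        - ∫ z, g (correctedOutcome T s z) ∂μ.map Z) ∂μ.map S :=
        (congr_arg₂ _
          (hindep.integral_comp_eq_integral_integral hS.aemeasurable hZ.aemeasurable hyes)
          (hindep.integral_comp_eq_integral_integral hS.aemeasurable hZ.aemeasurable hno)).trans
        (integral_sub hyes.integral_prod_left hno.integral_prod_left).symm
    _ ≤ ∫ s, ((Set.Ioc (T - w) T).indicator (fun _ => 1 - M) s + M) ∂μ.map S :=
        integral_mono (hyes.integral_prod_left.sub hno.integral_prod_left) hψ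
          fun s => integral_correctedOutcome_add_sub_le hfmeas hf0 hfi hdens hg hg0 hg1 hw.le s
    _ = _ := by
        rw [integral_add ((integrable_const _).indicator measurableSet_Ioc) (integrable_const _),
          integral_indicator_const _ measurableSet_Ioc, integral_const, probReal_univ,
          ← measureReal_def, ← measureReal_def, measureReal_lt_add_sub_measureReal_lt hS hw.le]
        simp only [smul_eq_mul, one_mul]
        ring
end

section
/- For b > 0 let f_b : ℝ → ℝ be the Laplace density f_b(y) = (1/(2b))·exp(−|y|/b). Then for every w ∈ ℝ, ∫_ℝ max(f_b(u − w) − f_b(u), 0) du ≤ 1 − exp(−|w|/b). -/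
/-!
Writing `f = f_b`, the triangle inequality `|u| ≤ |w| + |u - w|` gives the pointwise
differential-privacy bound `e^{-|w|/b} f(u - w) ≤ f(u)`. Hence
`max (f(u - w) - f(u)) 0 ≤ (1 - e^{-|w|/b}) f(u - w)`, and integrating against the
probability density `f(· - w)` yields the claim.
-/

open MeasureTheory Real Set

theorem integral_max_sub_zero_le_of_mul_le {α : Type*} [MeasurableSpace α] {μ : Measure α}
    {f g : α → ℝ} {c : ℝ} (hf : Integrable f μ) (hf₀ : 0 ≤ᵐ[μ] f) (hc : c ≤ 1)
    (hcfg : ∀ᵐ x ∂μ, c * f x ≤ g x) :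
    ∫ x, max (f x - g x) 0 ∂μ ≤ (1 - c) * ∫ x, f x ∂μ := by
  rw [← integral_const_mul]
  refine integral_mono_of_nonneg (.of_forall fun _ ↦ le_max_right _ _) (hf.const_mul _) ?_
  filter_upwards [hf₀, hcfg] with x hfx hcfgx
  exact max_le (by linarith) (mul_nonneg (by linarith) hfx)

noncomputable def laplacePDF (b x : ℝ) : ℝ := 1 / (2 * b) * exp (-|x| / b)

theorem laplacePDF_nonneg {b : ℝ} (hb : 0 ≤ b) (x : ℝ) : 0 ≤ laplacePDF b x := by
  unfold laplacePDF; positivity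

theorem exp_mul_laplacePDF_sub_le {b : ℝ} (hb : 0 ≤ b) (u w : ℝ) :
    exp (-|w| / b) * laplacePDF b (u - w) ≤ laplacePDF b u := by
  unfold laplacePDF
  rw [mul_left_comm, ← exp_add]
  gcongr
  rw [← add_div, ← neg_add]
  gcongr
  simpa using abs_add_le w (u - w)

theorem integral_laplacePDF {b : ℝ} (hb : 0 < b) : ∫ x, laplacePDF b x = 1 := by
  have h_half : ∫ x in Ioi (0 : ℝ), exp (-b⁻¹ * x) = b := by
    simpa using integral_exp_mul_Ioi (neg_lt_zero.mpr (inv_pos.mpr hb)) 0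
  unfold laplacePDF
  rw [integral_const_mul, integral_comp_abs (f := fun x ↦ exp (-x / b))]
  simp_rw [neg_div, div_eq_inv_mul, ← neg_mul, h_half]
  field_simp

theorem integrable_laplacePDF {b : ℝ} (hb : 0 < b) : Integrable (laplacePDF b) :=
  .of_integral_ne_zero (by rw [integral_laplacePDF hb]; exact one_ne_zero)

/-- Bound on the maximal bribe margin for Laplace noise of scale `b`:
`∫ max (f_b (u − w) − f_b u) 0 du ≤ 1 − e^{−|w|/b}`. -/
theorem laplace_max_advantage_bound
    (b : ℝ) (hb : 0 < b) (w : ℝ) :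
    ∫ u : ℝ, max ((1 / (2 * b)) * Real.exp (-|u - w| / b)
        - (1 / (2 * b)) * Real.exp (-|u| / b)) 0
      ≤ 1 - Real.exp (-|w| / b) := by
  show ∫ u, max (laplacePDF b (u - w) - laplacePDF b u) 0 ≤ 1 - exp (-|w| / b)
  have hc : exp (-|w| / b) ≤ 1 :=
    exp_le_one_iff.mpr (div_nonpos_of_nonpos_of_nonneg (neg_nonpos.mpr (abs_nonneg w)) hb.le)
  calc ∫ u, max (laplacePDF b (u - w) - laplacePDF b u) 0
      ≤ (1 - exp (-|w| / b)) * ∫ u, laplacePDF b (u - w) :=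
        integral_max_sub_zero_le_of_mul_le ((integrable_laplacePDF hb).comp_sub_right w)
          (.of_forall fun u ↦ laplacePDF_nonneg hb.le _) hc
          (.of_forall fun u ↦ exp_mul_laplacePDF_sub_le hb.le u w)
    _ = 1 - exp (-|w| / b) := by
        rw [integral_sub_right_eq_self (laplacePDF b) w, integral_laplacePDF hb, mul_one]
end
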